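/- In the power series ring ℚ(a)⟦t⟧[Q]/(Q²) (equivalently, working modulo Q² with coefficients polynomials in Q of degree ≤ 1 over ℚ[a, (1-a)⁻¹]⟦t⟦), set G = (exp((1-a)t) - a)/(1-a) + Q·exp(t), c₀ = a·Q·exp(t), and c₁ = 1 - a - a·Q·(exp(t) - exp(a·t))/(1-a). Then c₀·G + c₁·G' ≡ G'' (mod Q²) and c₀·G' + c₁·G'' ≡ G''' (mod Q²), where ' denotes d/dt. -/

import Mathlib

open PowerSeries TrivSqZeroExt

/-!
Differentiating `G` componentwise gives `G' = e^{(1-a)t} + Q e^t` (this is where `u (1 - a) = 1`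
enters), and every further derivative multiplies the `Q⁰`-part by `1 - a` and fixes the
`Q`-part `e^t`. The `Q⁰`-parts of both relations then agree trivially, while their `Q`-parts
reduce to `e^{at} e^{(1-a)t} = e^t` and `u (1 - a) = 1`.
-/

namespace PowerSeries

theorem derivative_rescale {R : Type*} [CommSemiring R] (c : R) (f : R⟦X⟧) :
    d⁄dX R (rescale c f) = C c * rescale c (d⁄dX R f) := by
  ext n
  simp only [coeff_derivative, coeff_rescale, coeff_C_mul, pow_succ]
  ring

theorem derivative_C_mul {R : Type*} [CommSemiring R] (c : R) (f : R⟦X⟧) :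
    d⁄dX R (C c * f) = C c * d⁄dX R f := by
  rw [Derivation.leibniz, derivative_C, smul_zero, add_zero, smul_eq_mul]

variable {A : Type*} [CommRing A] [Algebra ℚ A]

theorem derivative_rescale_exp (c : A) :
    d⁄dX A (rescale c (exp A)) = C c * rescale c (exp A) := by
  rw [derivative_rescale, derivative_exp]

theorem rescale_exp_mul_rescale_one_sub_exp (a : A) :
    rescale a (exp A) * rescale (1 - a) (exp A) = exp A := by
  rw [exp_mul_exp_eq_exp_add, add_sub_cancel, rescale_one, RingHom.id_apply]

end PowerSeries

/-- Verification of the big quantum K-theory product `O¹ ⋆ O¹` on `P¹` modulo `Q²`: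
with `G = (exp((1-a)t) - a)/(1-a) + Q·exp(t)`, `c₀ = a·Q·exp(t)`, and
`c₁ = 1 - a - a·Q·(exp(t) - exp(at))/(1-a)`, one has `c₀·G + c₁·G' ≡ G''` and
`c₀·G' + c₁·G'' ≡ G'''` modulo `Q²`.  We work in the dual numbers over `R⟦t⟧`
(so `Q = ε` with `ε² = 0`), with `u` an inverse of `1 - a`. -/
theorem big_quantum_product_P1 {R : Type*} [CommRing R] [Algebra ℚ R]
    (a u : R) (hu : (1 - a) * u = 1) :
    let E : PowerSeries R := PowerSeries.exp R
    -- the componentwise formal derivative d/dt on R⟦t⟧[ε]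
    let D : DualNumber (PowerSeries R) → DualNumber (PowerSeries R) :=
      fun x => inl (PowerSeries.derivativeFun x.fst) +
        DualNumber.eps * inl (PowerSeries.derivativeFun x.snd)
    -- G = (exp((1-a)t) - a)/(1-a) + Q exp(t)
    let G : DualNumber (PowerSeries R) :=
      inl (PowerSeries.C u * (PowerSeries.rescale (1 - a) E - PowerSeries.C a)) +
        DualNumber.eps * inl E
    -- c₀ = a Q exp(t)
    let c₀ : DualNumber (PowerSeries R) :=
      DualNumber.eps * inl (PowerSeries.C a * E)
    -- c₁ = 1 - a - a Q (exp(t) - exp(at))/(1-a)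
    let c₁ : DualNumber (PowerSeries R) :=
      inl (PowerSeries.C (1 - a)) -
        DualNumber.eps * inl (PowerSeries.C a * PowerSeries.C u *
          (E - PowerSeries.rescale a E))
    c₀ * G + c₁ * D G = D (D G) ∧
      c₀ * D G + c₁ * D (D G) = D (D (D G)) := by
  intro E D G c₀ c₁
  have hD : ∀ x y, D (inl x + DualNumber.eps * inl y) =
      inl (d⁄dX R x) + DualNumber.eps * inl (d⁄dX R y) := by
    intro x y
    simp [D, derivativeFun]
  have hinv : C u * (1 - C a) = (1 : R⟦X⟧) := by
    rw [← map_one C, ← map_sub, ← map_mul, mul_comm, hu]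
  have hDG : D G = inl (rescale (1 - a) E) + DualNumber.eps * inl E := by
    refine (hD _ _).trans ?_
    rw [derivative_C_mul, map_sub, derivative_rescale_exp, derivative_C, sub_zero, ← mul_assoc,
      ← map_mul, mul_comm u, hu, map_one, one_mul, derivative_exp]
  have hD2G : D (D G) = inl (C (1 - a) * rescale (1 - a) E) + DualNumber.eps * inl E := by
    rw [hDG, hD, derivative_rescale_exp, derivative_exp]
  have hD3G : D (D (D G)) =
      inl (C (1 - a) * (C (1 - a) * rescale (1 - a) E)) + DualNumber.eps * inl E := by
    rw [hD2G, hD, derivative_C_mul, derivative_rescale_exp, derivative_exp]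
  have hsplit := rescale_exp_mul_rescale_one_sub_exp a
  rw [hD3G, hD2G, hDG]
  refine ⟨TrivSqZeroExt.ext ?_ ?_, TrivSqZeroExt.ext ?_ ?_⟩ <;>
    simp only [G, c₀, c₁, E, fst_add, snd_add, fst_sub, snd_sub, fst_mul, DualNumber.snd_mul,
      fst_inl, snd_inl, DualNumber.fst_eps, DualNumber.snd_eps, map_sub, map_one]
  · ring
  · linear_combination C a * exp R * hinv + C a * C u * hsplit
  · ring
  · linear_combination -C a * (exp R - rescale a (exp R)) * rescale (1 - a) (exp R) * hinv +
      C a * hsplit
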